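/- Let D = (P, B) be a nontrivial 2-(v,k,λ) design with replication number r, and let G ≤ Aut(D) be half-flag-transitive with λ ≥ gcd(r, 2λ)². Then G has no normal subgroup N acting regularly on P such that N is the internal direct product of subgroups T_1, …, T_m with m ≥ 6, where each T_i is a nonabelian simple group, all T_i are isomorphic to a common group T, and conjugation by every element of G permutes the set {T_1, …, T_m}. -/

import Mathlib

open Finset

/-- `blocks` is a (simple) nontrivial 2-(v,k,λ) design on the point set `P`,
with replication number `r`. -/
structure IsTwoDesign {P : Type*} [Fintype P] [DecidableEq P]
    (blocks : Finset (Finset P)) (v k lam r : ℕ) : Prop where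
  card_points : Fintype.card P = v
  block_size : ∀ B ∈ blocks, B.card = k
  lam_pos : 0 < lam
  pair_count : ∀ x y : P, x ≠ y →
    (blocks.filter fun B => x ∈ B ∧ y ∈ B).card = lam
  repl_count : ∀ x : P, (blocks.filter fun B => x ∈ B).card = r
  k_gt : 2 < k
  k_lt : k < v - 1

/-- `G` is a group of automorphisms of the design with block set `blocks`:
every element of `G` maps blocks to blocks. -/
def IsAutGroup {P : Type*} [DecidableEq P] (G : Subgroup (Equiv.Perm P))
    (blocks : Finset (Finset P)) : Prop :=
  ∀ g ∈ G, ∀ B ∈ blocks, B.image ⇑g ∈ blocks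

/-- `G` is half-flag-transitive on the design with block set `blocks`:
`G` is transitive on blocks, and for every block `B` the setwise stabilizer
of `B` in `G` has exactly two orbits `O₁`, `O₂` on the points of `B`,
of equal size (hence each of size `k/2`). -/
def HalfFlagTransitive {P : Type*} [DecidableEq P] (G : Subgroup (Equiv.Perm P))
    (blocks : Finset (Finset P)) : Prop :=
  (∀ B₁ ∈ blocks, ∀ B₂ ∈ blocks, ∃ g ∈ G, B₁.image ⇑g = B₂) ∧
  ∀ B ∈ blocks, ∃ O₁ O₂ : Finset P,
    O₁.Nonempty ∧ O₂.Nonempty ∧ Disjoint O₁ O₂ ∧ O₁ ∪ O₂ = B ∧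
    O₁.card = O₂.card ∧
    (∀ g ∈ G, B.image ⇑g = B → O₁.image ⇑g = O₁) ∧
    (∀ g ∈ G, B.image ⇑g = B → O₂.image ⇑g = O₂) ∧
    (∀ x ∈ O₁, ∀ y ∈ O₁, ∃ g ∈ G, B.image ⇑g = B ∧ g x = y) ∧
    (∀ x ∈ O₂, ∀ y ∈ O₂, ∃ g ∈ G, B.image ⇑g = B ∧ g x = y)

/-- `C` is a partition of the point set `P` that is invariant under `G`. -/
def IsInvariantPartition {P : Type*} [Fintype P] [DecidableEq P]
    (G : Subgroup (Equiv.Perm P)) (C : Finset (Finset P)) : Prop :=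
  (∀ c ∈ C, c.Nonempty) ∧
  (∀ x : P, ∃! c : Finset P, c ∈ C ∧ x ∈ c) ∧
  (∀ g ∈ G, ∀ c ∈ C, c.image ⇑g ∈ C)

/-- A partition of `P` is trivial if all classes are singletons, or it is `{P}`. -/
def TrivialPartition {P : Type*} [Fintype P] [DecidableEq P]
    (C : Finset (Finset P)) : Prop :=
  (∀ c ∈ C, c.card = 1) ∨ C = {Finset.univ}

/-- `G` is point-primitive: it is transitive on points and the only
`G`-invariant partitions of the point set are the trivial ones. -/
def PointPrimitive {P : Type*} [Fintype P] [DecidableEq P]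
    (G : Subgroup (Equiv.Perm P)) : Prop :=
  (∀ x y : P, ∃ g ∈ G, g x = y) ∧
  ∀ C : Finset (Finset P), IsInvariantPartition G C → TrivialPartition C

section AuxiliaryLemmas

variable {P : Type*} [Fintype P] [DecidableEq P]
  {blocks : Finset (Finset P)} {v k lam r : ℕ}

lemma TD.v5 (hD : IsTwoDesign blocks v k lam r) : 5 ≤ v := by
  have h1 := hD.k_gt; have h2 := hD.k_lt; omega

lemma TD.nonemptyP (hD : IsTwoDesign blocks v k lam r) : Nonempty P := by
  have := hD.card_points
  have h5 := TD.v5 hD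
  refine Fintype.card_pos_iff.mp ?_
  omega

/-- b * k = v * r -/
lemma TD.bk (hD : IsTwoDesign blocks v k lam r) : blocks.card * k = v * r := by
  classical
  have h1 : ∑ B ∈ blocks, B.card = blocks.card * k := by
    rw [Finset.sum_congr rfl hD.block_size, Finset.sum_const, smul_eq_mul]
  have h2 : ∑ B ∈ blocks, B.card = ∑ B ∈ blocks, ∑ p : P, (if p ∈ B then 1 else 0) := by
    refine Finset.sum_congr rfl fun B _ => ?_
    rw [Finset.sum_ite_mem, Finset.univ_inter, Finset.sum_const, smul_eq_mul, mul_one]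
  have h3 : ∑ B ∈ blocks, ∑ p : P, (if p ∈ B then 1 else 0)
      = ∑ p : P, ∑ B ∈ blocks, (if p ∈ B then 1 else 0) := Finset.sum_comm
  have h4 : ∀ p : P, ∑ B ∈ blocks, (if p ∈ B then (1:ℕ) else 0) = r := by
    intro p; rw [← Finset.card_filter]; exact hD.repl_count p
  rw [← h1, h2, h3, Finset.sum_congr rfl fun p _ => h4 p, Finset.sum_const, smul_eq_mul,
    Finset.card_univ, hD.card_points]

/-- lam * (v-1) = r * (k-1) -/
lemma TD.basic (hD : IsTwoDesign blocks v k lam r) : lam * (v - 1) = r * (k - 1) := by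
  classical
  obtain ⟨x⟩ := TD.nonemptyP hD
  have h1 : ∑ y ∈ Finset.univ.erase x, (blocks.filter fun B => x ∈ B ∧ y ∈ B).card
      = (v - 1) * lam := by
    rw [Finset.sum_congr rfl (fun y hy => hD.pair_count x y (Ne.symm (Finset.ne_of_mem_erase hy))),
      Finset.sum_const, smul_eq_mul, Finset.card_erase_of_mem (Finset.mem_univ x),
      Finset.card_univ, hD.card_points]
  have h2 : ∑ y ∈ Finset.univ.erase x, (blocks.filter fun B => x ∈ B ∧ y ∈ B).card
      = ∑ B ∈ blocks, ∑ y ∈ Finset.univ.erase x, (if x ∈ B ∧ y ∈ B then 1 else 0) := by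
    rw [Finset.sum_comm]
    refine Finset.sum_congr rfl fun y _ => ?_
    rw [Finset.card_filter]
  have h3 : ∀ B ∈ blocks, ∑ y ∈ Finset.univ.erase x, (if x ∈ B ∧ y ∈ B then (1:ℕ) else 0)
      = if x ∈ B then k - 1 else 0 := by
    intro B hB
    by_cases hx : x ∈ B
    · simp only [hx, true_and, if_pos]
      rw [Finset.sum_ite_mem]
      have : Finset.univ.erase x ∩ B = B.erase x := by
        ext z; simp [Finset.mem_erase, and_comm]
      rw [this, Finset.sum_const, smul_eq_mul, mul_one, Finset.card_erase_of_mem hx,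
        hD.block_size B hB]
    · simp [hx]
  have h4 : ∑ B ∈ blocks, (if x ∈ B then k - 1 else 0) = r * (k - 1) := by
    rw [← Finset.sum_filter, Finset.sum_const, smul_eq_mul, hD.repl_count x]
  have key : (v - 1) * lam = r * (k - 1) :=
    h1.symm.trans (h2.trans ((Finset.sum_congr rfl h3).trans h4))
  rw [mul_comm]; exact key

lemma TD.r_gt_lam (hD : IsTwoDesign blocks v k lam r) : lam < r := by
  have hb := TD.basic hD
  have h5 := TD.v5 hD
  have hk := hD.k_gt; have hk2 := hD.k_lt
  by_contra h
  push_neg at h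
  have : r * (k - 1) ≤ lam * (k - 1) := Nat.mul_le_mul_right _ h
  rw [← hb] at this
  have : lam * (v - 1) ≤ lam * (k-1) := this
  have h2 := Nat.le_of_mul_le_mul_left this hD.lam_pos
  omega

lemma TD.r_pos (hD : IsTwoDesign blocks v k lam r) : 0 < r :=
  lt_of_le_of_lt (Nat.zero_le _) (TD.r_gt_lam hD)

/-- Fisher's inequality -/
lemma TD.fisher (hD : IsTwoDesign blocks v k lam r) : v ≤ blocks.card := by
  classical
  -- the linear map sending x to its block sums
  let f : (P → ℚ) →ₗ[ℚ] ({B // B ∈ blocks} → ℚ) :=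
    { toFun := fun x B => ∑ p ∈ B.1, x p
      map_add' := by intro x y; funext B; simp [Finset.sum_add_distrib]
      map_smul' := by intro c x; funext B; simp [Finset.mul_sum] }
  have hker : ∀ x : P → ℚ, f x = 0 → x = 0 := by
    intro x hx
    have hx' : ∀ B ∈ blocks, ∑ p ∈ B, x p = 0 := by
      intro B hB; exact congrFun hx ⟨B, hB⟩
    set S : ℚ := ∑ p : P, x p with hS
    have claim1 : ∀ p : P, (r : ℚ) * x p + (lam : ℚ) * (S - x p) = 0 := by
      intro p
      have e0 : ∑ B ∈ blocks.filter (fun B => p ∈ B), (∑ q ∈ B, x q) = 0 := by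
        refine Finset.sum_eq_zero fun B hB => ?_
        exact hx' B (Finset.mem_of_mem_filter B hB)
      have e1 : ∑ B ∈ blocks.filter (fun B => p ∈ B), (∑ q ∈ B, x q)
          = ∑ q : P, ((blocks.filter fun B => p ∈ B ∧ q ∈ B).card : ℚ) * x q := by
        have : ∀ B ∈ blocks.filter (fun B => p ∈ B), ∑ q ∈ B, x q
            = ∑ q : P, (if q ∈ B then x q else 0) := by
          intro B _
          rw [Finset.sum_ite_mem, Finset.univ_inter]
        rw [Finset.sum_congr rfl this, Finset.sum_comm]
        refine Finset.sum_congr rfl fun q _ => ?_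
        rw [← Finset.sum_filter, Finset.filter_filter, Finset.sum_const, nsmul_eq_mul]

      have e2 : ∑ q : P, ((blocks.filter fun B => p ∈ B ∧ q ∈ B).card : ℚ) * x q
          = (r : ℚ) * x p + (lam : ℚ) * (S - x p) := by
        rw [← Finset.add_sum_erase _ _ (Finset.mem_univ p)]
        have hpp : (blocks.filter fun B => p ∈ B ∧ p ∈ B) = blocks.filter fun B => p ∈ B := by
          simp
        rw [hpp, hD.repl_count p]
        congr 1
        have : ∀ q ∈ Finset.univ.erase p,
            ((blocks.filter fun B => p ∈ B ∧ q ∈ B).card : ℚ) * x q = (lam : ℚ) * x q := by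
          intro q hq
          rw [hD.pair_count p q (Ne.symm (Finset.ne_of_mem_erase hq))]
        rw [Finset.sum_congr rfl this, ← Finset.mul_sum]
        congr 1
        rw [hS, ← Finset.add_sum_erase _ _ (Finset.mem_univ p)]
        ring
      have := e0.symm.trans (e1.trans e2); linarith [this]
    have hSzero : S = 0 := by
      have hsum : ∑ p : P, ((r : ℚ) * x p + (lam : ℚ) * (S - x p)) = 0 :=
        Finset.sum_eq_zero fun p _ => claim1 p
      have hexp : ∑ p : P, ((r : ℚ) * x p + (lam : ℚ) * (S - x p))
          = ((r : ℚ) - lam) * S + (v : ℚ) * lam * S := by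
        rw [Finset.sum_add_distrib, ← Finset.mul_sum, ← hS]
        have : ∑ p : P, (lam : ℚ) * (S - x p) = (lam:ℚ) * ((v:ℚ) * S - S) := by
          rw [← Finset.mul_sum]
          congr 1
          rw [Finset.sum_sub_distrib, Finset.sum_const, ← hS, Finset.card_univ,
            hD.card_points, nsmul_eq_mul]
        rw [this]; ring
      rw [hexp] at hsum
      have hrl : (lam : ℚ) < r := by exact_mod_cast TD.r_gt_lam hD
      have hvl : (0:ℚ) < (v:ℚ) * lam := by
        have h5 := TD.v5 hD
        have : (0:ℚ) < (v:ℚ) := by exact_mod_cast (by omega : 0 < v)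
        have : (0:ℚ) < (lam:ℚ) := by exact_mod_cast hD.lam_pos
        positivity
      rcases mul_eq_zero.mp (by linarith [hsum] : (((r:ℚ) - lam) + (v:ℚ)*lam) * S = 0) with h | h
      · linarith
      · exact h
    funext p
    have := claim1 p
    rw [hSzero] at this
    have hrl : (lam : ℚ) < r := by exact_mod_cast TD.r_gt_lam hD
    have : ((r:ℚ) - lam) * x p = 0 := by linarith
    rcases mul_eq_zero.mp this with h | h
    · linarith
    · exact h
  have hinj : Function.Injective f := by
    intro a b hab
    have : f (a - b) = 0 := by rw [map_sub, hab, sub_self]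
    have := hker _ this
    exact sub_eq_zero.mp this
  have := LinearMap.finrank_le_finrank_of_injective hinj
  rw [Module.finrank_pi, Module.finrank_pi, Fintype.card_coe, hD.card_points] at this
  exact this

lemma TD.k_le_r (hD : IsTwoDesign blocks v k lam r) : k ≤ r := by
  have hbk := TD.bk hD
  have hf := TD.fisher hD
  have h5 := TD.v5 hD
  have hvk : v * k ≤ blocks.card * k := Nat.mul_le_mul_right _ hf
  rw [hbk] at hvk
  exact Nat.le_of_mul_le_mul_left hvk (by omega)

lemma img_mul (g h : Equiv.Perm P) (A : Finset P) :
    A.image ⇑(g * h) = (A.image ⇑h).image ⇑g := by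
  rw [Finset.image_image]; rfl

lemma img_inv (g : Equiv.Perm P) {A B : Finset P} (h : A.image ⇑g = B) :
    B.image ⇑g⁻¹ = A := by
  rw [← h, Finset.image_image]
  refine Finset.image_congr (fun x _ => ?_) |>.trans (Finset.image_id)
  simp

lemma mem_img {g : Equiv.Perm P} {A B : Finset P} (h : A.image ⇑g = B) {x : P}
    (hx : x ∈ A) : g x ∈ B := h ▸ Finset.mem_image_of_mem _ hx

/-- pushing one orbit to another along an element of `G` -/
lemma orbit_push {G : Subgroup (Equiv.Perm P)} {B B' A A' : Finset P}
    (hinvA : ∀ g ∈ G, B.image ⇑g = B → A.image ⇑g = A)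
    (htrA : ∀ x ∈ A, ∀ y ∈ A, ∃ g ∈ G, B.image ⇑g = B ∧ g x = y)
    (hinvA' : ∀ g ∈ G, B'.image ⇑g = B' → A'.image ⇑g = A')
    (htrA' : ∀ x ∈ A', ∀ y ∈ A', ∃ g ∈ G, B'.image ⇑g = B' ∧ g x = y)
    {g : Equiv.Perm P} (hg : g ∈ G) (hgB : B.image ⇑g = B')
    {x₀ : P} (hx₀ : x₀ ∈ A) (hgx₀ : g x₀ ∈ A') : A.image ⇑g = A' := by
  apply Finset.Subset.antisymm
  · intro z hz
    obtain ⟨w, hw, rfl⟩ := Finset.mem_image.mp hz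
    obtain ⟨h, hhG, hhB, hhx⟩ := htrA x₀ hx₀ w hw
    have hu : (g * h * g⁻¹) ∈ G := G.mul_mem (G.mul_mem hg hhG) (G.inv_mem hg)
    have huB' : B'.image ⇑(g * h * g⁻¹) = B' := by
      rw [img_mul, img_mul, img_inv g hgB, hhB, hgB]
    have := mem_img (hinvA' _ hu huB') hgx₀
    have heq : (g * h * g⁻¹) (g x₀) = g w := by
      simp [Equiv.Perm.mul_apply, hhx]
    rwa [heq] at this
  · intro z hz
    obtain ⟨h, hhG, hhB', hhx⟩ := htrA' (g x₀) hgx₀ z hz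
    have hw : (g⁻¹ * h * g) ∈ G := G.mul_mem (G.mul_mem (G.inv_mem hg) hhG) hg
    have hwB : B.image ⇑(g⁻¹ * h * g) = B := by
      rw [img_mul, img_mul, hgB, hhB', img_inv g hgB]
    have hmem : (g⁻¹ * h * g) x₀ ∈ A := mem_img (hinvA _ hw hwB) hx₀
    refine Finset.mem_image.mpr ⟨_, hmem, ?_⟩
    simp [Equiv.Perm.mul_apply, hhx]

lemma pow_aux : ∀ m : ℕ, 6 ≤ m → m ^ 2 ≤ 3 ^ (m - 2) := by
  intro m hm
  induction m, hm using Nat.le_induction with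
  | base => norm_num
  | succ n hn ih =>
    have h1 : (n + 1) ^ 2 ≤ 2 * n ^ 2 := by nlinarith
    have h2 : 2 * n ^ 2 ≤ 2 * 3 ^ (n - 2) := by omega
    have h3 : (2:ℕ) * 3 ^ (n - 2) ≤ 3 * 3 ^ (n - 2) := by
      exact Nat.mul_le_mul_right _ (by norm_num)
    have h4 : (3:ℕ) * 3 ^ (n - 2) = 3 ^ (n + 1 - 2) := by
      rw [← pow_succ']
      congr 1
      omega
    omega

/-- pushing the complementary orbit -/
lemma complement_push {g : Equiv.Perm P} {B B' A C A' C' : Finset P}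
    (hU : A ∪ C = B) (hU' : A' ∪ C' = B') (hd : Disjoint A C)
    (hc : A.card = C.card) (hc' : A'.card = C'.card)
    (hgB : B.image ⇑g = B') (hgA : A.image ⇑g = A') : C.image ⇑g = C' := by
  have hsub : C.image ⇑g ⊆ C' := by
    intro z hz
    obtain ⟨w, hw, rfl⟩ := Finset.mem_image.mp hz
    have hzB' : g w ∈ B' := mem_img hgB (hU ▸ Finset.mem_union_right _ hw)
    have hmem : g w ∈ A' ∪ C' := hU' ▸ hzB'
    rcases Finset.mem_union.mp hmem with h | h
    · exfalso
      rw [← hgA] at h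
      obtain ⟨w', hw', hww⟩ := Finset.mem_image.mp h
      have : w' = w := g.injective hww
      subst this
      exact Finset.disjoint_left.mp hd hw' hw
    · exact h
  have h1 : (C.image ⇑g).card = C.card := Finset.card_image_of_injective _ g.injective
  have h2 : A'.card = A.card := by
    rw [← hgA, Finset.card_image_of_injective _ g.injective]
  exact Finset.eq_of_subset_of_card_le hsub (by omega)

end AuxiliaryLemmas

/-- flag class relative to a base block and base point -/
def Cls {P : Type*} [DecidableEq P] (G : Subgroup (Equiv.Perm P)) (B₀ : Finset P) (y₀ : P)
    (x : P) (B : Finset P) : Prop :=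
  ∃ g ∈ G, B₀.image ⇑g = B ∧ g y₀ = x


theorem half_flag_transitive_no_twisted_wreath_socle
    {P : Type*} [Fintype P] [DecidableEq P]
    (blocks : Finset (Finset P)) (v k lam r : ℕ)
    (hD : IsTwoDesign blocks v k lam r)
    (G : Subgroup (Equiv.Perm P))
    (hAut : IsAutGroup G blocks)
    (hHFT : HalfFlagTransitive G blocks)
    (hlam : Nat.gcd r (2 * lam) ^ 2 ≤ lam) :
    ¬ ∃ (N : Subgroup (Equiv.Perm P)) (m : ℕ) (T : Fin m → Subgroup (Equiv.Perm P)),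
      N ≤ G ∧
      -- `N` is normal in `G`:
      (∀ g ∈ G, ∀ n ∈ N, g * n * g⁻¹ ∈ N) ∧
      -- `N` acts regularly on `P`:
      (∀ x y : P, ∃ n ∈ N, n x = y) ∧
      (∀ n ∈ N, ∀ x : P, n x = x → n = 1) ∧
      6 ≤ m ∧
      -- `N` is the internal direct product of the `T i`:
      (∀ i, T i ≤ N) ∧
      (∀ i j, i ≠ j → ∀ x ∈ T i, ∀ y ∈ T j, x * y = y * x) ∧
      (∀ n ∈ N, ∃! f : ∀ i, ↥(T i),
        (List.ofFn fun i => ((f i : Equiv.Perm P))).prod = n) ∧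
      -- each `T i` is a nonabelian simple group:
      (∀ i, IsSimpleGroup ↥(T i)) ∧
      (∀ i, ¬ ∀ x ∈ T i, ∀ y ∈ T i, x * y = y * x) ∧
      -- all `T i` are isomorphic to a common group:
      (∀ i j, Nonempty (↥(T i) ≃* ↥(T j))) ∧
      -- conjugation by elements of `G` permutes the set `{T 1, …, T m}`:
      (∀ g ∈ G, ∀ i, ∃ j, ∀ x : Equiv.Perm P, g * x * g⁻¹ ∈ T j ↔ x ∈ T i) := by
  classical
  rintro ⟨N, m, T, hNG, _hnorm, htrans, hfree, hm, hTN, _hcomm, hfact, _hsimple,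
    hnonab, hiso, hconj⟩
  obtain ⟨hBtrans, hOrb⟩ := hHFT
  choose O₁ O₂ hO1ne hO2ne hdisj hunion hcardO hinv1 hinv2 htr1 htr2 using hOrb
  have hv5 := TD.v5 hD
  have hrpos := TD.r_pos hD
  have hlam0 := hD.lam_pos
  have hkr := TD.k_le_r hD
  have hbasic := TD.basic hD
  have hbk := TD.bk hD
  obtain ⟨α⟩ := TD.nonemptyP hD
  -- a base block
  obtain ⟨B₀, hB₀⟩ : ∃ B₀, B₀ ∈ blocks := by
    have hr := hD.repl_count α
    have hne : (blocks.filter fun B => α ∈ B).Nonempty := by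
      rw [← Finset.card_pos, hr]; exact hrpos
    obtain ⟨B₀, hB₀⟩ := hne
    exact ⟨B₀, Finset.mem_of_mem_filter _ hB₀⟩
  obtain ⟨y₁, hy₁⟩ := hO1ne B₀ hB₀
  obtain ⟨y₂, hy₂⟩ := hO2ne B₀ hB₀
  have hsub1 : ∀ B (hB : B ∈ blocks), O₁ B hB ⊆ B := by
    intro B hB z hz
    rw [← hunion B hB]; exact Finset.mem_union_left _ hz
  have hsub2 : ∀ B (hB : B ∈ blocks), O₂ B hB ⊆ B := by
    intro B hB z hz
    rw [← hunion B hB]; exact Finset.mem_union_right _ hz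
  have hmemB : ∀ B (hB : B ∈ blocks), ∀ x ∈ B, x ∈ O₁ B hB ∨ x ∈ O₂ B hB := by
    intro B hB x hx
    rw [← Finset.mem_union, hunion B hB]; exact hx
  have hcardk : ∀ B (hB : B ∈ blocks),
      2 * (O₁ B hB).card = k ∧ 2 * (O₂ B hB).card = k := by
    intro B hB
    have h1 : (O₁ B hB).card + (O₂ B hB).card = k := by
      rw [← Finset.card_union_of_disjoint (hdisj B hB), hunion B hB, hD.block_size B hB]
    have h2 := hcardO B hB
    omega
  -- moving the orbit decomposition along an element of G
  have hmove : ∀ B (hB : B ∈ blocks), ∀ B' (hB' : B' ∈ blocks), ∀ g ∈ G,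
      B.image ⇑g = B' →
      ((O₁ B hB).image ⇑g = O₁ B' hB' ∧ (O₂ B hB).image ⇑g = O₂ B' hB') ∨
      ((O₁ B hB).image ⇑g = O₂ B' hB' ∧ (O₂ B hB).image ⇑g = O₁ B' hB') := by
    intro B hB B' hB' g hg hgB
    obtain ⟨a, ha⟩ := hO1ne B hB
    have haB' : g a ∈ B' := mem_img hgB (hsub1 B hB ha)
    rcases hmemB B' hB' _ haB' with h | h
    · left
      have h1 : (O₁ B hB).image ⇑g = O₁ B' hB' :=
        orbit_push (hinv1 B hB) (htr1 B hB) (hinv1 B' hB') (htr1 B' hB') hg hgB ha h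
      exact ⟨h1, complement_push (hunion B hB) (hunion B' hB') (hdisj B hB)
        (hcardO B hB) (hcardO B' hB') hgB h1⟩
    · right
      have h1 : (O₁ B hB).image ⇑g = O₂ B' hB' :=
        orbit_push (hinv1 B hB) (htr1 B hB) (hinv2 B' hB') (htr2 B' hB') hg hgB ha h
      refine ⟨h1, complement_push (hunion B hB) (by rw [Finset.union_comm]; exact hunion B' hB')
        (hdisj B hB) (hcardO B hB) ?_ hgB h1⟩
      exact (hcardO B' hB').symm
  -- exclusivity of the two flag classes
  have hexcl : ∀ (B : Finset P) (x : P), Cls G B₀ y₁ x B → Cls G B₀ y₂ x B → False := by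
    rintro B x ⟨g, hg, hgB, hgy⟩ ⟨g', hg', hgB', hgy'⟩
    have hh : g⁻¹ * g' ∈ G := G.mul_mem (G.inv_mem hg) hg'
    have h1 : B₀.image ⇑(g⁻¹ * g') = B₀ := by rw [img_mul, hgB', img_inv g hgB]
    have h2 : (g⁻¹ * g') y₂ = y₁ := by
      have hxy : g y₁ = g' y₂ := hgy.trans hgy'.symm
      show g⁻¹ (g' y₂) = y₁
      rw [← hxy]; simp
    have h3 := mem_img (hinv2 B₀ hB₀ _ hh h1) hy₂
    rw [h2] at h3
    exact Finset.disjoint_left.mp (hdisj B₀ hB₀) hy₁ h3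
  -- exhaustivity
  have hexh : ∀ B (hB : B ∈ blocks), ∀ x ∈ B, Cls G B₀ y₁ x B ∨ Cls G B₀ y₂ x B := by
    intro B hB x hx
    obtain ⟨g, hg, hgB⟩ := hBtrans B₀ hB₀ B hB
    rcases hmove B₀ hB₀ B hB g hg hgB with ⟨h1, h2⟩ | ⟨h1, h2⟩ <;>
      rcases hmemB B hB x hx with hx1 | hx2
    · left
      obtain ⟨h, hh, hhB, hhx⟩ := htr1 B hB (g y₁) (mem_img h1 hy₁) x hx1
      exact ⟨h * g, G.mul_mem hh hg, by rw [img_mul, hgB, hhB], by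
        show h (g y₁) = x; rw [hhx]⟩
    · right
      obtain ⟨h, hh, hhB, hhx⟩ := htr2 B hB (g y₂) (mem_img h2 hy₂) x hx2
      exact ⟨h * g, G.mul_mem hh hg, by rw [img_mul, hgB, hhB], by
        show h (g y₂) = x; rw [hhx]⟩
    · right
      obtain ⟨h, hh, hhB, hhx⟩ := htr1 B hB (g y₂) (mem_img h2 hy₂) x hx1
      exact ⟨h * g, G.mul_mem hh hg, by rw [img_mul, hgB, hhB], by
        show h (g y₂) = x; rw [hhx]⟩
    · left
      obtain ⟨h, hh, hhB, hhx⟩ := htr2 B hB (g y₁) (mem_img h1 hy₁) x hx2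
      exact ⟨h * g, G.mul_mem hh hg, by rw [img_mul, hgB, hhB], by
        show h (g y₁) = x; rw [hhx]⟩
  -- consistency: any two g mapping B₀ to the same block move an invariant part the same way
  have hcons : ∀ (A : Finset P), (∀ u ∈ G, B₀.image ⇑u = B₀ → A.image ⇑u = A) →
      ∀ g ∈ G, ∀ g' ∈ G, B₀.image ⇑g = B₀.image ⇑g' → A.image ⇑g = A.image ⇑g' := by
    intro A hinvA g hg g' hg' hBB
    have hu : g'⁻¹ * g ∈ G := G.mul_mem (G.inv_mem hg') hg
    have huB : B₀.image ⇑(g'⁻¹ * g) = B₀ := by rw [img_mul, hBB, img_inv g' rfl]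
    have hA := hinvA _ hu huB
    have : A.image ⇑(g' * (g'⁻¹ * g)) = A.image ⇑g' := by rw [img_mul, hA]
    rw [show g' * (g'⁻¹ * g) = g by group] at this
    exact this
  -- the class-1 points of a block are exactly one of the two orbits
  have hclass1 : ∀ B (hB : B ∈ blocks), ∀ g ∈ G, B₀.image ⇑g = B →
      B.filter (fun x => Cls G B₀ y₁ x B) = (O₁ B₀ hB₀).image ⇑g := by
    intro B hB g hg hgB
    ext z
    simp only [Finset.mem_filter]
    constructor
    · rintro ⟨hzB, g', hg', hgB', hgy'⟩
      rw [hcons (O₁ B₀ hB₀) (hinv1 B₀ hB₀) g hg g' hg' (hgB.trans hgB'.symm)]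
      rw [← hgy']
      exact Finset.mem_image_of_mem _ hy₁
    · intro hz
      obtain ⟨w, hw, rfl⟩ := Finset.mem_image.mp hz
      refine ⟨mem_img hgB (hsub1 B₀ hB₀ hw), ?_⟩
      obtain ⟨h, hh, hhB₀, hhy⟩ := htr1 B₀ hB₀ y₁ hy₁ w hw
      exact ⟨g * h, G.mul_mem hg hh, by rw [img_mul, hhB₀, hgB], by
        show g (h y₁) = g w; rw [hhy]⟩
  have hclass2 : ∀ B (hB : B ∈ blocks), ∀ g ∈ G, B₀.image ⇑g = B →
      B.filter (fun x => Cls G B₀ y₂ x B) = (O₂ B₀ hB₀).image ⇑g := by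
    intro B hB g hg hgB
    ext z
    simp only [Finset.mem_filter]
    constructor
    · rintro ⟨hzB, g', hg', hgB', hgy'⟩
      rw [hcons (O₂ B₀ hB₀) (hinv2 B₀ hB₀) g hg g' hg' (hgB.trans hgB'.symm)]
      rw [← hgy']
      exact Finset.mem_image_of_mem _ hy₂
    · intro hz
      obtain ⟨w, hw, rfl⟩ := Finset.mem_image.mp hz
      refine ⟨mem_img hgB (hsub2 B₀ hB₀ hw), ?_⟩
      obtain ⟨h, hh, hhB₀, hhy⟩ := htr2 B₀ hB₀ y₂ hy₂ w hw
      exact ⟨g * h, G.mul_mem hg hh, by rw [img_mul, hhB₀, hgB], by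
        show g (h y₂) = g w; rw [hhy]⟩
  have hclassblk1 : ∀ B (hB : B ∈ blocks),
      2 * (B.filter (fun x => Cls G B₀ y₁ x B)).card = k := by
    intro B hB
    obtain ⟨g, hg, hgB⟩ := hBtrans B₀ hB₀ B hB
    rw [hclass1 B hB g hg hgB, Finset.card_image_of_injective _ g.injective]
    exact (hcardk B₀ hB₀).1
  have hclassblk2 : ∀ B (hB : B ∈ blocks),
      2 * (B.filter (fun x => Cls G B₀ y₂ x B)).card = k := by
    intro B hB
    obtain ⟨g, hg, hgB⟩ := hBtrans B₀ hB₀ B hB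
    rw [hclass2 B hB g hg hgB, Finset.card_image_of_injective _ g.injective]
    exact (hcardk B₀ hB₀).2
  -- splitting the blocks through a point into the two classes
  have hsplitset : ∀ x : P, blocks.filter (fun B => x ∈ B)
      = (blocks.filter fun B => x ∈ B ∧ Cls G B₀ y₁ x B)
        ∪ (blocks.filter fun B => x ∈ B ∧ Cls G B₀ y₂ x B) := by
    intro x
    ext B
    simp only [Finset.mem_filter, Finset.mem_union]
    constructor
    · rintro ⟨hB, hx⟩
      rcases hexh B hB x hx with h | h
      · exact Or.inl ⟨hB, hx, h⟩
      · exact Or.inr ⟨hB, hx, h⟩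
    · rintro (⟨hB, hx, -⟩ | ⟨hB, hx, -⟩) <;> exact ⟨hB, hx⟩
  have hsplitdisj : ∀ x : P,
      Disjoint (blocks.filter fun B => x ∈ B ∧ Cls G B₀ y₁ x B)
        (blocks.filter fun B => x ∈ B ∧ Cls G B₀ y₂ x B) := by
    intro x
    rw [Finset.disjoint_left]
    rintro B h1 h2
    rw [Finset.mem_filter] at h1 h2
    exact hexcl B x h1.2.2 h2.2.2
  have hsplit : ∀ x : P, (blocks.filter fun B => x ∈ B ∧ Cls G B₀ y₁ x B).card
      + (blocks.filter fun B => x ∈ B ∧ Cls G B₀ y₂ x B).card = r := by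
    intro x
    rw [← Finset.card_union_of_disjoint (hsplitdisj x), ← hsplitset x, hD.repl_count x]
  -- point transitivity
  have hptrans : ∀ x x' : P, ∃ g ∈ G, g x = x' := by
    intro x x'
    obtain ⟨n, hn, hnx⟩ := htrans x x'
    exact ⟨n, hNG hn, hnx⟩
  -- the class-1 count is the same at every point
  have hconst : ∀ x x' : P, (blocks.filter fun B => x ∈ B ∧ Cls G B₀ y₁ x B).card
      = (blocks.filter fun B => x' ∈ B ∧ Cls G B₀ y₁ x' B).card := by
    intro x x'
    obtain ⟨n, hg, hnx⟩ := hptrans x x'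
    have himg : (blocks.filter fun B => x' ∈ B ∧ Cls G B₀ y₁ x' B)
        = (blocks.filter fun B => x ∈ B ∧ Cls G B₀ y₁ x B).image
            (fun B => B.image ⇑n) := by
      ext B'
      simp only [Finset.mem_image, Finset.mem_filter]
      constructor
      · rintro ⟨hB', hx', g', hg', hgB', hgy'⟩
        have hBB' : (B'.image ⇑n⁻¹).image ⇑n = B' := by
          rw [← img_mul]; simp
        refine ⟨B'.image ⇑n⁻¹, ⟨hAut n⁻¹ (G.inv_mem hg) B' hB', ?_, ?_⟩, hBB'⟩
        · have hmem : n⁻¹ x' ∈ B'.image ⇑n⁻¹ := Finset.mem_image_of_mem _ hx'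
          rwa [← hnx, (show ∀ y, n⁻¹ (n y) = y from fun y => by simp)] at hmem
        · refine ⟨n⁻¹ * g', G.mul_mem (G.inv_mem hg) hg', by
            rw [img_mul, hgB'], ?_⟩
          show n⁻¹ (g' y₁) = x
          rw [hgy', ← hnx, (show ∀ y, n⁻¹ (n y) = y from fun y => by simp)]
      · rintro ⟨B, ⟨hB, hx, g', hg', hgB', hgy'⟩, rfl⟩
        refine ⟨hAut n hg B hB, ?_, ?_⟩
        · rw [← hnx]; exact Finset.mem_image_of_mem _ hx
        · refine ⟨n * g', G.mul_mem hg hg', by rw [img_mul, hgB'], ?_⟩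
          show n (g' y₁) = x'
          rw [hgy', hnx]
    rw [himg, Finset.card_image_of_injective _
      (Finset.image_injective n.injective)]
  -- double counting class-1 flags
  have hdouble : ∑ x : P, (blocks.filter fun B => x ∈ B ∧ Cls G B₀ y₁ x B).card
      = ∑ B ∈ blocks, (B.filter (fun x => Cls G B₀ y₁ x B)).card := by
    have h1 : ∀ x : P, (blocks.filter fun B => x ∈ B ∧ Cls G B₀ y₁ x B).card
        = ∑ B ∈ blocks, (if x ∈ B ∧ Cls G B₀ y₁ x B then 1 else 0) := by
      intro x; rw [Finset.card_filter]
    rw [Finset.sum_congr rfl fun x _ => h1 x, Finset.sum_comm]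
    refine Finset.sum_congr rfl fun B hB => ?_
    rw [← Finset.card_filter]
    congr 1
    ext z
    simp [Finset.mem_filter]
  have hR1 : 2 * (blocks.filter fun B => α ∈ B ∧ Cls G B₀ y₁ α B).card = r := by
    have h1 : ∑ x : P, (blocks.filter fun B => x ∈ B ∧ Cls G B₀ y₁ x B).card
        = v * (blocks.filter fun B => α ∈ B ∧ Cls G B₀ y₁ α B).card := by
      rw [Finset.sum_congr rfl fun x _ => hconst x α, Finset.sum_const,
        Finset.card_univ, hD.card_points, smul_eq_mul]
    have h2 : 2 * ∑ B ∈ blocks, (B.filter (fun x => Cls G B₀ y₁ x B)).card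
        = blocks.card * k := by
      rw [Finset.mul_sum, Finset.sum_congr rfl (fun B hB => hclassblk1 B hB),
        Finset.sum_const, smul_eq_mul]
    have h3 : 2 * (v * (blocks.filter fun B => α ∈ B ∧ Cls G B₀ y₁ α B).card)
        = v * r := by
      rw [← hdouble, h1] at h2
      rw [h2]
      exact hbk
    have hv0 : 0 < v := by omega
    have := h3
    rw [show 2 * (v * (blocks.filter fun B => α ∈ B ∧ Cls G B₀ y₁ α B).card)
      = v * (2 * (blocks.filter fun B => α ∈ B ∧ Cls G B₀ y₁ α B).card) by ring] at this
    exact Nat.eq_of_mul_eq_mul_left hv0 this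
  have hR2 : 2 * (blocks.filter fun B => α ∈ B ∧ Cls G B₀ y₂ α B).card = r := by
    have := hsplit α
    omega
  -- a nontrivial element of the first factor
  have hi0 : (0 : ℕ) < m := by omega
  set i0 : Fin m := ⟨0, hi0⟩ with hi0def
  obtain ⟨s₁, hs₁T, w₁, hw₁T, hsw⟩ : ∃ x ∈ T i0, ∃ y ∈ T i0, x * y ≠ y * x := by
    have h := hnonab i0
    push_neg at h
    exact h
  have hs₁ne : s₁ ≠ 1 := by
    intro h; exact hsw (by rw [h, one_mul, mul_one])
  have hw₁ne : w₁ ≠ 1 := by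
    intro h; exact hsw (by rw [h, one_mul, mul_one])
  have hs₁w₁ : s₁ ≠ w₁ := by
    intro h; exact hsw (by rw [h])
  have hs₁N : s₁ ∈ N := hTN i0 hs₁T
  -- the orbit Δ of s₁ • α under the stabilizer of α
  set Δ : Finset P :=
    Finset.univ.filter (fun z => ∃ g ∈ G, g α = α ∧ g (s₁ α) = z) with hΔdef
  have hsαΔ : s₁ α ∈ Δ := by
    rw [hΔdef, Finset.mem_filter]
    exact ⟨Finset.mem_univ _, 1, G.one_mem, by simp, by simp⟩
  have hΔinv : ∀ g ∈ G, g α = α → Δ.image ⇑g = Δ := by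
    intro g hg hgα
    have hsub : ∀ u : Equiv.Perm P, u ∈ G → u α = α → Δ.image ⇑u ⊆ Δ := by
      intro u hu huα z hz
      obtain ⟨w, hw, rfl⟩ := Finset.mem_image.mp hz
      rw [hΔdef, Finset.mem_filter] at hw ⊢
      obtain ⟨-, h, hhG, hhα, hhs⟩ := hw
      refine ⟨Finset.mem_univ _, u * h, G.mul_mem hu hhG, ?_, ?_⟩
      · show u (h α) = α; rw [hhα, huα]
      · show u (h (s₁ α)) = u w; rw [hhs]
    apply Finset.eq_of_subset_of_card_le (hsub g hg hgα)
    rw [Finset.card_image_of_injective _ g.injective]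
  have hαΔ : α ∉ Δ := by
    rw [hΔdef, Finset.mem_filter]
    rintro ⟨-, h, hhG, hhα, hhs⟩
    have : s₁ α = α := by
      have h2 : h (s₁ α) = h α := by rw [hhs, hhα]
      exact h.injective h2
    exact hs₁ne (hfree s₁ hs₁N α this)
  -- the support-one point set
  set SP : Finset P :=
    Finset.univ.filter (fun z => ∃ i : Fin m, ∃ n : Equiv.Perm P,
      n ∈ T i ∧ n ≠ 1 ∧ n α = z) with hSPdef
  have hΔSP : Δ ⊆ SP := by
    intro z hz
    rw [hΔdef, Finset.mem_filter] at hz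
    obtain ⟨-, h, hhG, hhα, hhs⟩ := hz
    obtain ⟨j, hj⟩ := hconj h hhG i0
    rw [hSPdef, Finset.mem_filter]
    refine ⟨Finset.mem_univ _, j, h * s₁ * h⁻¹, (hj s₁).mpr hs₁T, ?_, ?_⟩
    · intro hcon
      have : s₁ = 1 := by
        have := congrArg (fun u => h⁻¹ * u * h) hcon
        simpa [mul_assoc] using this
      exact hs₁ne this
    · have hinvα : h⁻¹ α = α := by
        have := congrArg (⇑h⁻¹) hhα
        simpa using this.symm.trans (by simp : (⇑h⁻¹) (h α) = α)
      show h (s₁ (h⁻¹ α)) = z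
      rw [hinvα, hhs]
  -- counting pairs through α and Δ
  have hpair : lam * Δ.card = ∑ B ∈ blocks.filter (fun B => α ∈ B), (Δ ∩ B).card := by
    have h1 : ∑ z ∈ Δ, (blocks.filter fun B => α ∈ B ∧ z ∈ B).card = Δ.card * lam := by
      rw [Finset.sum_congr rfl (fun z hz => hD.pair_count α z (by
        intro h; exact hαΔ (h ▸ hz))), Finset.sum_const, smul_eq_mul]
    have h2 : ∑ z ∈ Δ, (blocks.filter fun B => α ∈ B ∧ z ∈ B).card
        = ∑ B ∈ blocks, ∑ z ∈ Δ, (if α ∈ B ∧ z ∈ B then 1 else 0) := by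
      rw [Finset.sum_comm]
      exact Finset.sum_congr rfl fun z _ => Finset.card_filter _ _
    have h3 : ∀ B ∈ blocks, (∑ z ∈ Δ, if α ∈ B ∧ z ∈ B then (1:ℕ) else 0)
        = if α ∈ B then (Δ ∩ B).card else 0 := by
      intro B _
      by_cases hα : α ∈ B
      · simp only [hα, true_and, if_pos]
        rw [Finset.sum_ite_mem, Finset.sum_const, smul_eq_mul, mul_one]
      · simp [hα]
    have h4 : ∑ B ∈ blocks, (if α ∈ B then (Δ ∩ B).card else 0)
        = ∑ B ∈ blocks.filter (fun B => α ∈ B), (Δ ∩ B).card := by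
      rw [Finset.sum_filter]
    rw [← h4, ← Finset.sum_congr rfl h3, ← h2, h1, mul_comm]
  -- |Δ ∩ B| is constant on each class of blocks through α
  have hconstI : ∀ y₀ : P, ∀ B B' : Finset P, Cls G B₀ y₀ α B → Cls G B₀ y₀ α B' →
      (Δ ∩ B).card = (Δ ∩ B').card := by
    rintro y₀ B B' ⟨g, hg, hgB, hgy⟩ ⟨g', hg', hgB', hgy'⟩
    have hu : g' * g⁻¹ ∈ G := G.mul_mem hg' (G.inv_mem hg)
    have huα : (g' * g⁻¹) α = α := by
      have h1 : g⁻¹ α = y₀ := by rw [← hgy]; simp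
      show g' (g⁻¹ α) = α
      rw [h1, hgy']
    have huB : B.image ⇑(g' * g⁻¹) = B' := by rw [img_mul, img_inv g hgB, hgB']
    have hΔu : Δ.image ⇑(g' * g⁻¹) = Δ := hΔinv _ hu huα
    calc (Δ ∩ B).card = ((Δ ∩ B).image ⇑(g' * g⁻¹)).card :=
          (Finset.card_image_of_injective _ (Equiv.injective _)).symm
      _ = (Δ ∩ B').card := by
          rw [Finset.image_inter _ _ (Equiv.injective _), hΔu, huB]
  -- sum over each class is (class size) * (common intersection number)
  have hsumclass : ∀ y₀ : P, ∃ e : ℕ,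
      ∑ B ∈ blocks.filter (fun B => α ∈ B ∧ Cls G B₀ y₀ α B), (Δ ∩ B).card
        = (blocks.filter (fun B => α ∈ B ∧ Cls G B₀ y₀ α B)).card * e := by
    intro y₀
    rcases Finset.eq_empty_or_nonempty
        (blocks.filter (fun B => α ∈ B ∧ Cls G B₀ y₀ α B)) with he | ⟨B₁, hB₁⟩
    · exact ⟨0, by rw [he]; simp⟩
    · refine ⟨(Δ ∩ B₁).card, ?_⟩
      have hB₁' := (Finset.mem_filter.mp hB₁).2.2
      rw [Finset.sum_congr rfl (fun B hB =>
        hconstI y₀ B B₁ (Finset.mem_filter.mp hB).2.2 hB₁'), Finset.sum_const, smul_eq_mul]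
  obtain ⟨e₁, he₁⟩ := hsumclass y₁
  obtain ⟨e₂, he₂⟩ := hsumclass y₂
  -- r divides 2 * lam * |Δ|
  have hsplitsum : ∑ B ∈ blocks.filter (fun B => α ∈ B), (Δ ∩ B).card
      = ∑ B ∈ blocks.filter (fun B => α ∈ B ∧ Cls G B₀ y₁ α B), (Δ ∩ B).card
      + ∑ B ∈ blocks.filter (fun B => α ∈ B ∧ Cls G B₀ y₂ α B), (Δ ∩ B).card := by
    rw [hsplitset α, Finset.sum_union (hsplitdisj α)]
  have hdvd : r ∣ 2 * lam * Δ.card := by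
    refine ⟨e₁ + e₂, ?_⟩
    have : 2 * (lam * Δ.card) = 2 * ((blocks.filter (fun B => α ∈ B ∧ Cls G B₀ y₁ α B)).card * e₁)
        + 2 * ((blocks.filter (fun B => α ∈ B ∧ Cls G B₀ y₂ α B)).card * e₂) := by
      rw [hpair, hsplitsum, he₁, he₂]; ring
    calc 2 * lam * Δ.card = 2 * (lam * Δ.card) := by ring
      _ = (2 * (blocks.filter (fun B => α ∈ B ∧ Cls G B₀ y₁ α B)).card) * e₁
          + (2 * (blocks.filter (fun B => α ∈ B ∧ Cls G B₀ y₂ α B)).card) * e₂ := by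
          rw [this]; ring
      _ = r * e₁ + r * e₂ := by rw [hR1, hR2]
      _ = r * (e₁ + e₂) := by ring
  -- number theory: r' = r / gcd(r, 2 lam) divides |Δ|
  set d := Nat.gcd r (2 * lam) with hddef
  have hd_pos : 0 < d := Nat.gcd_pos_of_pos_left _ hrpos
  set r' := r / d with hr'def
  have hrd : d * r' = r := Nat.mul_div_cancel' (Nat.gcd_dvd_left _ _)
  obtain ⟨c, hc⟩ : d ∣ 2 * lam := Nat.gcd_dvd_right _ _
  have hcoprime : Nat.Coprime r' c := by
    have hc' : c = (2 * lam) / d := by rw [hc, Nat.mul_div_cancel_left _ hd_pos]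
    rw [hr'def, hc', hddef]
    exact Nat.coprime_div_gcd_div_gcd hd_pos
  have hr'dvd : r' ∣ c * Δ.card := by
    have h1 : d * r' ∣ d * (c * Δ.card) := by
      rw [hrd, ← mul_assoc, ← hc]
      exact hdvd
    exact (Nat.mul_dvd_mul_iff_left hd_pos).mp h1
  have hr'Δ : r' ∣ Δ.card := hcoprime.dvd_of_dvd_mul_left hr'dvd
  have hΔpos : 0 < Δ.card := Finset.card_pos.mpr ⟨s₁ α, hsαΔ⟩
  have hr'le : r' ≤ Δ.card := Nat.le_of_dvd hΔpos hr'Δ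
  -- cardinality of the common factor
  set t := Nat.card ↥(T i0) with htdef
  have hcardTi : ∀ i : Fin m, Nat.card ↥(T i) = t :=
    fun i => Nat.card_congr (hiso i i0).some.toEquiv
  -- the support-one point set has at most m * (t-1) elements
  have hTifin : ∀ i : Fin m,
      (Finset.univ.filter (fun n : Equiv.Perm P => n ∈ T i ∧ n ≠ 1)).card = t - 1 := by
    intro i
    have h1 : (Finset.univ.filter (fun n : Equiv.Perm P => n ∈ T i ∧ n ≠ 1))
        = (Finset.univ.filter (fun n : Equiv.Perm P => n ∈ T i)).erase 1 := by
      ext n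
      simp only [Finset.mem_filter, Finset.mem_erase, Finset.mem_univ, true_and]
      tauto
    have h2 : (Finset.univ.filter (fun n : Equiv.Perm P => n ∈ T i)).card = t := by
      rw [← hcardTi i, Nat.card_eq_fintype_card]
      exact (Fintype.card_subtype _).symm
    rw [h1, Finset.card_erase_of_mem (by
      simp only [Finset.mem_filter, Finset.mem_univ, true_and]
      exact (T i).one_mem), h2]
  have hSPcard : SP.card ≤ m * (t - 1) := by
    have hsub : SP ⊆ Finset.univ.biUnion (fun i : Fin m =>
        (Finset.univ.filter (fun n : Equiv.Perm P => n ∈ T i ∧ n ≠ 1)).image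
          (fun n => n α)) := by
      intro z hz
      rw [hSPdef, Finset.mem_filter] at hz
      obtain ⟨-, i, n, h1, h2, h3⟩ := hz
      exact Finset.mem_biUnion.mpr ⟨i, Finset.mem_univ _,
        Finset.mem_image.mpr ⟨n, Finset.mem_filter.mpr ⟨Finset.mem_univ _, h1, h2⟩, h3⟩⟩
    calc SP.card ≤ _ := Finset.card_le_card hsub
      _ ≤ ∑ i : Fin m, ((Finset.univ.filter
            (fun n : Equiv.Perm P => n ∈ T i ∧ n ≠ 1)).image (fun n => n α)).card :=
          Finset.card_biUnion_le
      _ ≤ ∑ _i : Fin m, (t - 1) := Finset.sum_le_sum (fun i _ =>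
          le_trans Finset.card_image_le (le_of_eq (hTifin i)))
      _ = m * (t - 1) := by
          rw [Finset.sum_const, smul_eq_mul, Finset.card_univ, Fintype.card_fin]
  have hΔle : Δ.card ≤ m * (t - 1) := le_trans (Finset.card_le_card hΔSP) hSPcard
  have hr'le' : r' ≤ m * (t - 1) := le_trans hr'le hΔle
  -- v = t ^ m
  have hNv : Nat.card ↥N = v := by
    have hbij : Function.Bijective (fun n : ↥N => (n : Equiv.Perm P) α) := by
      constructor
      · rintro ⟨n, hn⟩ ⟨n', hn'⟩ h
        simp only at h
        have hmem : n'⁻¹ * n ∈ N := N.mul_mem (N.inv_mem hn') hn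
        have hfix : (n'⁻¹ * n) α = α := by
          show n'⁻¹ (n α) = α
          rw [h]; simp
        have h1 := hfree _ hmem α hfix
        have h2 : n = n' := by
          have := congrArg (fun u => n' * u) h1
          simpa [mul_assoc] using this
        exact Subtype.ext h2
      · intro z
        obtain ⟨n, hn, hnz⟩ := htrans α z
        exact ⟨⟨n, hn⟩, hnz⟩
    rw [Nat.card_eq_of_bijective _ hbij, Nat.card_eq_fintype_card, hD.card_points]
  have hNt : Nat.card ↥N = t ^ m := by
    have hmemprod : ∀ f : (∀ i, ↥(T i)),
        (List.ofFn fun i => ((f i : Equiv.Perm P))).prod ∈ N := by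
      intro f
      apply Subgroup.list_prod_mem
      intro g hg
      obtain ⟨i, hi⟩ := List.mem_ofFn.mp hg
      exact hi ▸ hTN i (f i).2
    have hbij2 : Function.Bijective (fun f : (∀ i, ↥(T i)) =>
        (⟨(List.ofFn fun i => ((f i : Equiv.Perm P))).prod, hmemprod f⟩ : ↥N)) := by
      constructor
      · intro f f' h
        have h' : (List.ofFn fun i => ((f i : Equiv.Perm P))).prod
            = (List.ofFn fun i => ((f' i : Equiv.Perm P))).prod :=
          congrArg Subtype.val h
        obtain ⟨fu, -, hunique⟩ := hfact _ (hmemprod f)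
        exact (hunique f rfl).trans (hunique f' h'.symm).symm
      · rintro ⟨n, hn⟩
        obtain ⟨f, hf, -⟩ := hfact n hn
        exact ⟨f, Subtype.ext hf⟩
    rw [← Nat.card_eq_of_bijective _ hbij2, Nat.card_pi,
      Finset.prod_congr rfl (fun i _ => hcardTi i), Finset.prod_const,
      Finset.card_univ, Fintype.card_fin]
  have hvt : v = t ^ m := hNv.symm.trans hNt
  -- t ≥ 3
  have ht3 : 3 ≤ t := by
    have h3 : ({(⟨s₁, hs₁T⟩ : ↥(T i0)), ⟨w₁, hw₁T⟩, 1} : Finset ↥(T i0)).card = 3 := by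
      rw [Finset.card_insert_of_notMem, Finset.card_insert_of_notMem,
        Finset.card_singleton]
      · simp only [Finset.mem_singleton]
        intro h
        exact hw₁ne (congrArg Subtype.val h)
      · simp only [Finset.mem_insert, Finset.mem_singleton]
        rintro (h | h)
        · exact hs₁w₁ (congrArg Subtype.val h)
        · exact hs₁ne (congrArg Subtype.val h)
    calc 3 = _ := h3.symm
      _ ≤ Fintype.card ↥(T i0) := Finset.card_le_univ _
      _ = t := by rw [htdef, Nat.card_eq_fintype_card]
  -- final contradiction
  have hfin1 : lam * (v - 1) < lam * (r' * r') := by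
    calc lam * (v - 1) = r * (k - 1) := hbasic
      _ ≤ r * (r - 1) := Nat.mul_le_mul_left _ (by omega)
      _ < r * r := mul_lt_mul_of_pos_left (by omega) hrpos
      _ = (d * d) * (r' * r') := by rw [← hrd]; ring
      _ ≤ lam * (r' * r') := Nat.mul_le_mul_right _ (by
          have : d * d = d ^ 2 := by ring
          rw [this]
          exact hlam)
  have hvr' : v - 1 < r' * r' := Nat.lt_of_mul_lt_mul_left hfin1
  have hbound : r' * r' ≤ (m * (t - 1)) * (m * (t - 1)) := Nat.mul_le_mul hr'le' hr'le'
  have hkey : (m * (t - 1)) * (m * (t - 1)) < v := by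
    rw [hvt]
    have hmm : m * m ≤ 3 ^ (m - 2) := by
      have := pow_aux m hm
      rwa [pow_two] at this
    have h33 : (3:ℕ) ^ (m - 2) ≤ t ^ (m - 2) := Nat.pow_le_pow_left ht3 _
    calc (m * (t - 1)) * (m * (t - 1)) = (m * m) * ((t - 1) * (t - 1)) := by ring
      _ ≤ t ^ (m - 2) * ((t - 1) * (t - 1)) :=
          Nat.mul_le_mul_right _ (le_trans hmm h33)
      _ < t ^ (m - 2) * (t * t) := by
          apply mul_lt_mul_of_pos_left
          · exact Nat.mul_lt_mul'' (by omega) (by omega)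
          · exact Nat.pow_pos (by omega)
      _ = t ^ m := by
          rw [← pow_two, ← pow_add]
          congr 1
          omega
  omega
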